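/- arXiv:2102.04941 — 3 statements merged into one kernel-verified Lean document; each statement's English description precedes it below -/
import Mathlib

section
/- For every c : S × S → ℝ, the surrogate function ψ_{Q̃}(Q) = Σ_{(i,j)∈B} Q_{ij}·c_{ij} − ψ̄_{Q̃}(Q) is concave on the set {Q : S × S → ℝ | Q_{ij} ≥ 0 for all (i,j) ∈ B and Q_{ij} = 0 for (i,j) ∉ B}. -/
open Finset

/-- Row sum `μ_i(Q) = Σ_{j : (i,j) ∈ B} Q_{ij}` of an edge measure `Q` supported on `B`. -/
noncomputable def rowSum {S : Type} [Fintype S] [DecidableEq S]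
    (B : Finset (S × S)) (Q : S × S → ℝ) (i : S) : ℝ :=
  ∑ j ∈ Finset.univ.filter (fun j => (i, j) ∈ B), Q (i, j)

/-- The shifted edge measure `Q̂_{ij} = (1-κ)·Q̃_{ij} + κ·Q_{ij}`. -/
noncomputable def hatQ {α : Type} (Qt : α → ℝ) (κ : ℝ) (Q : α → ℝ) : α → ℝ :=
  fun e => (1 - κ) * Qt e + κ * Q e

/-- The surrogate penalty function
`ψ̄_{Q̃}(Q) = κ'·( Σ_{(i,j)∈B} Q̂_{ij}·log(Q̂_{ij}/Q̃_{ij}) − Σ_{i∈S} μ̂_i·log(μ̂_i/μ̃_i) )`,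
with the convention `0·log(0/b) = 0` (automatic, since `Real.log 0 = 0`). -/
noncomputable def psibar {S : Type} [Fintype S] [DecidableEq S]
    (B : Finset (S × S)) (Qt : S × S → ℝ) (κ κ' : ℝ) (Q : S × S → ℝ) : ℝ :=
  κ' * ((∑ e ∈ B, hatQ Qt κ Q e * Real.log (hatQ Qt κ Q e / Qt e)) -
        ∑ i : S, rowSum B (hatQ Qt κ Q) i *
          Real.log (rowSum B (hatQ Qt κ Q) i / rowSum B Qt i))

/-! The bracket in `psibar` is, by the chain rule for relative entropy, the conditional relative
entropy of the transition kernel of `Q̂` with respect to that of `Q̃`: the sum over `e ∈ B` of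
`Q̂_e log (Q̂_e / μ̂_{e.1})` plus a term linear in `Q̂`. The function `(x, y) ↦ x log (x / y)` is
jointly convex on `0 ≤ x ≤ y`, being positively homogeneous and subadditive (the log-sum
inequality, which is Jensen for `t log t`), and `Q ↦ (Q̂_e, μ̂_{e.1})` is affine. So `ψ̄` is convex
and `ψ`, a linear function minus `ψ̄`, is concave. -/

open Real

lemma mul_log_div_sub_mul_log_div {x q m r : ℝ} (hm : x ≠ 0 → m ≠ 0) (hq : q ≠ 0) (hr : r ≠ 0) :
    x * log (x / q) - x * log (m / r) = x * log (x / m) + x * log (r / q) := by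
  rcases eq_or_ne x 0 with rfl | hx
  · simp
  · rw [log_div hx hq, log_div (hm hx) hr, log_div hx (hm hx), log_div hr hq]
    ring

lemma mul_mul_log_mul_div_mul (c x y : ℝ) :
    c * x * log (c * x / (c * y)) = c * (x * log (x / y)) := by
  rcases eq_or_ne c 0 with rfl | hc
  · simp
  · rw [mul_div_mul_left _ _ hc, mul_assoc]

lemma add_mul_log_add_div_add_le {x₁ y₁ x₂ y₂ : ℝ} (hx₁ : 0 ≤ x₁) (hxy₁ : x₁ ≤ y₁)
    (hx₂ : 0 ≤ x₂) (hxy₂ : x₂ ≤ y₂) :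
    (x₁ + x₂) * log ((x₁ + x₂) / (y₁ + y₂)) ≤ x₁ * log (x₁ / y₁) + x₂ * log (x₂ / y₂) := by
  rcases (hx₁.trans hxy₁).eq_or_lt with rfl | hy₁
  · obtain rfl : x₁ = 0 := le_antisymm hxy₁ hx₁
    simp
  rcases (hx₂.trans hxy₂).eq_or_lt with rfl | hy₂
  · obtain rfl : x₂ = 0 := le_antisymm hxy₂ hx₂
    simp
  have hy : 0 < y₁ + y₂ := add_pos hy₁ hy₂
  have jensen := convexOn_mul_log.2 (div_nonneg hx₁ hy₁.le) (div_nonneg hx₂ hy₂.le)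
    (div_nonneg hy₁.le hy.le) (div_nonneg hy₂.le hy.le) (by rw [← add_div, div_self hy.ne'])
  have hmean :
      y₁ / (y₁ + y₂) * (x₁ / y₁) + y₂ / (y₁ + y₂) * (x₂ / y₂) = (x₁ + x₂) / (y₁ + y₂) := by
    field_simp
  simp only [smul_eq_mul, hmean] at jensen
  calc (x₁ + x₂) * log ((x₁ + x₂) / (y₁ + y₂))
        = (y₁ + y₂) * ((x₁ + x₂) / (y₁ + y₂) * log ((x₁ + x₂) / (y₁ + y₂))) := by
        field_simp
    _ ≤ (y₁ + y₂) * (y₁ / (y₁ + y₂) * (x₁ / y₁ * log (x₁ / y₁))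
          + y₂ / (y₁ + y₂) * (x₂ / y₂ * log (x₂ / y₂))) := by
        gcongr
    _ = x₁ * log (x₁ / y₁) + x₂ * log (x₂ / y₂) := by
        field_simp

lemma convex_le_fst_snd : Convex ℝ {p : ℝ × ℝ | 0 ≤ p.1 ∧ p.1 ≤ p.2} :=
  fun _ hp _ hq _ _ ha hb _ =>
    ⟨add_nonneg (mul_nonneg ha hp.1) (mul_nonneg hb hq.1),
      add_le_add (mul_le_mul_of_nonneg_left hp.2 ha) (mul_le_mul_of_nonneg_left hq.2 hb)⟩

lemma convexOn_mul_log_div :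
    ConvexOn ℝ {p : ℝ × ℝ | 0 ≤ p.1 ∧ p.1 ≤ p.2} fun p => p.1 * log (p.1 / p.2) := by
  refine ⟨convex_le_fst_snd, fun p hp q hq a b ha hb _ => ?_⟩
  calc _ ≤ a * p.1 * log (a * p.1 / (a * p.2)) + b * q.1 * log (b * q.1 / (b * q.2)) :=
        add_mul_log_add_div_add_le (mul_nonneg ha hp.1) (mul_le_mul_of_nonneg_left hp.2 ha)
          (mul_nonneg hb hq.1) (mul_le_mul_of_nonneg_left hq.2 hb)
    _ = _ := by rw [mul_mul_log_mul_div_mul, mul_mul_log_mul_div_mul]; rfl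

theorem ConvexOn.sum {𝕜 E β ι : Type*} [Semiring 𝕜] [PartialOrder 𝕜] [AddCommMonoid E]
    [AddCommMonoid β] [PartialOrder β] [IsOrderedAddMonoid β] [SMul 𝕜 E] [Module 𝕜 β]
    {s : Set E} {t : Finset ι} {f : ι → E → β} (hs : Convex 𝕜 s)
    (hf : ∀ i ∈ t, ConvexOn 𝕜 s (f i)) : ConvexOn 𝕜 s fun x => ∑ i ∈ t, f i x := by
  classical
  induction t using Finset.induction_on with
  | empty => simpa using convexOn_const 0 hs
  | insert i t hi ih =>
    simp_rw [Finset.sum_insert hi]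
    exact (hf i (mem_insert_self i t)).add (ih fun j hj => hf j (mem_insert_of_mem hj))

lemma convex_setOf_nonneg {ι : Type*} (t : Finset ι) :
    Convex ℝ {W : ι → ℝ | ∀ i ∈ t, 0 ≤ W i} :=
  fun _ hx _ hy _ _ ha hb _ i hi =>
    add_nonneg (mul_nonneg ha (hx i hi)) (mul_nonneg hb (hy i hi))

section RowSum

variable {S : Type} [Fintype S] [DecidableEq S] (B : Finset (S × S))

lemma sum_mul_rowSum (W : S × S → ℝ) (h : S → ℝ) :
    ∑ e ∈ B, W e * h e.1 = ∑ i, rowSum B W i * h i := by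
  rw [← Finset.sum_ite_mem_eq, Fintype.sum_prod_type]
  simp only [rowSum, Finset.sum_mul, Finset.sum_filter, ite_mul, zero_mul]

lemma le_rowSum {W : S × S → ℝ} (hW : ∀ e ∈ B, 0 ≤ W e) {e : S × S} (he : e ∈ B) :
    W e ≤ rowSum B W e.1 :=
  Finset.single_le_sum (f := fun j => W (e.1, j)) (fun _ hj => hW _ (mem_filter.1 hj).2)
    (mem_filter.2 ⟨mem_univ _, he⟩)

/-- The conditional relative entropy
`∑ e ∈ B, W e * log ((W e / μ_{e.1}(W)) / (Qt e / μ_{e.1}(Qt)))`,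
split into a part convex in `W` and a part linear in `W`. -/
noncomputable def condRelEntropy (Qt W : S × S → ℝ) : ℝ :=
  ∑ e ∈ B, (W e * log (W e / rowSum B W e.1) + W e * log (rowSum B Qt e.1 / Qt e))

lemma condRelEntropy_eq_relEntropy_sub {Qt W : S × S → ℝ} (hQt : ∀ e ∈ B, 0 < Qt e)
    (hW : ∀ e ∈ B, 0 ≤ W e) :
    condRelEntropy B Qt W = ∑ e ∈ B, W e * log (W e / Qt e) -
        ∑ i, rowSum B W i * log (rowSum B W i / rowSum B Qt i) := by
  rw [← sum_mul_rowSum, ← sum_sub_distrib, condRelEntropy]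
  symm
  refine sum_congr rfl fun e he => mul_log_div_sub_mul_log_div (fun hx => ?_) (hQt e he).ne'
    ((hQt e he).trans_le (le_rowSum B (fun e he => (hQt e he).le) he)).ne'
  exact ((hW e he).lt_of_ne' hx |>.trans_le (le_rowSum B hW he)).ne'

lemma convexOn_condRelEntropy (Qt : S × S → ℝ) :
    ConvexOn ℝ {W : S × S → ℝ | ∀ e ∈ B, 0 ≤ W e} (condRelEntropy B Qt) := by
  refine ConvexOn.sum (convex_setOf_nonneg B) fun e he => ConvexOn.add ?_
    (((LinearMap.proj e : (S × S → ℝ) →ₗ[ℝ] ℝ).smulRight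
      (log (rowSum B Qt e.1 / Qt e))).convexOn (convex_setOf_nonneg B))
  let g : (S × S → ℝ) →ₗ[ℝ] ℝ × ℝ := (LinearMap.proj e).prod
    (∑ j ∈ univ.filter (fun j => (e.1, j) ∈ B), LinearMap.proj (e.1, j))
  refine ((convexOn_mul_log_div.comp_linearMap g).subset
    (fun W (hW : ∀ e ∈ B, 0 ≤ W e) => ⟨hW e he, ?_⟩) (convex_setOf_nonneg B)).congr fun W _ => ?_
  · simpa [g, rowSum] using le_rowSum B hW he
  · simp [g, rowSum]

end RowSum

lemma hatQ_eq_homothety {α : Type} (Qt : α → ℝ) (κ : ℝ) :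
    hatQ Qt κ = AffineMap.homothety Qt κ := by
  funext Q e
  simp only [hatQ, AffineMap.homothety_apply, vsub_eq_sub, vadd_eq_add, Pi.add_apply,
    Pi.smul_apply, Pi.sub_apply, smul_eq_mul]
  ring

theorem surrogate_concaveOn_general {S : Type} [Fintype S] [DecidableEq S] (B : Finset (S × S))
    (Qt : S × S → ℝ) (hQtpos : ∀ e ∈ B, 0 < Qt e)
    (κ κ' : ℝ) (hκ0 : 0 < κ) (hκ1 : κ ≤ 1) (hκ' : 0 < κ')
    (c : S × S → ℝ) :
    ConcaveOn ℝ {Q : S × S → ℝ | (∀ e ∈ B, 0 ≤ Q e) ∧ ∀ e ∉ B, Q e = 0}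
      (fun Q => (∑ e ∈ B, Q e * c e) - psibar B Qt κ κ' Q) := by
  set D := {Q : S × S → ℝ | (∀ e ∈ B, 0 ≤ Q e) ∧ ∀ e ∉ B, Q e = 0}
  have hD : Convex ℝ D := (convex_setOf_nonneg B).inter fun _ hx _ hy _ _ _ _ _ e he => by
    simp [hx e he, hy e he]
  have hhatQ : ∀ Q ∈ D, ∀ e ∈ B, 0 ≤ hatQ Qt κ Q e := fun Q hQ e he =>
    add_nonneg (mul_nonneg (sub_nonneg.2 hκ1) (hQtpos e he).le) (mul_nonneg hκ0.le (hQ.1 e he))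
  have hpsibar : ConvexOn ℝ D (psibar B Qt κ κ') := by
    refine ((((convexOn_condRelEntropy B Qt).comp_affineMap (AffineMap.homothety Qt κ)).subset
      (fun Q hQ => hatQ_eq_homothety Qt κ ▸ hhatQ Q hQ) hD).smul hκ'.le).congr fun Q hQ => ?_
    rw [psibar, ← condRelEntropy_eq_relEntropy_sub B hQtpos (hhatQ Q hQ), hatQ_eq_homothety]
    rfl
  let linear : (S × S → ℝ) →ₗ[ℝ] ℝ :=
    { toFun := fun Q => ∑ e ∈ B, Q e * c e
      map_add' := fun _ _ => by simp only [Pi.add_apply, add_mul, sum_add_distrib]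
      map_smul' := fun _ _ => by simp only [Pi.smul_apply, smul_eq_mul, mul_sum, mul_assoc,
        RingHom.id_apply] }
  exact (linear.concaveOn hD).sub hpsibar

/-- For every coefficient function `c : S × S → ℝ`, the surrogate
function `ψ_{Q̃}(Q) = Σ_{(i,j)∈B} Q_{ij}·c_{ij} − ψ̄_{Q̃}(Q)` is concave on the set of
edge measures `Q` that are nonnegative on `B` and vanish off `B`. -/
theorem surrogate_concaveOn {S : Type} [Fintype S] [DecidableEq S] (B : Finset (S × S))
    (hB : ∀ i : S, ∃ j : S, (i, j) ∈ B)
    (Qt : S × S → ℝ) (hQtoff : ∀ e ∉ B, Qt e = 0) (hQtpos : ∀ e ∈ B, 0 < Qt e)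
    (κ κ' : ℝ) (hκ0 : 0 < κ) (hκ1 : κ ≤ 1) (hκ' : 0 < κ')
    (c : S × S → ℝ) :
    ConcaveOn ℝ {Q : S × S → ℝ | (∀ e ∈ B, 0 ≤ Q e) ∧ ∀ e ∉ B, Q e = 0}
      (fun Q => (∑ e ∈ B, Q e * c e) - psibar B Qt κ κ' Q) :=
  surrogate_concaveOn_general B Qt hQtpos κ κ' hκ0 hκ1 hκ' c
end

section
/- For every Q : S × S → ℝ with Q_{ij} ≥ 0 for all (i,j) ∈ B and Q_{ij} = 0 off B, it holds that ψ̄_{Q̃}(Q) ≥ 0; moreover ψ̄_{Q̃}(Q̃) = 0. Consequently, for every c : S × S → ℝ the surrogate function ψ_{Q̃}(Q) = Σ_{(i,j)∈B} Q_{ij}·c_{ij} − ψ̄_{Q̃}(Q) satisfies ψ_{Q̃}(Q) ≤ Σ_{(i,j)∈B} Q_{ij}·c_{ij} for all such Q, with equality at Q = Q̃, i.e., ψ_{Q̃}(Q̃) = Σ_{(i,j)∈B} Q̃_{ij}·c_{ij}. -/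
open Finset

/-! Both entropy sums in `ψ̄` are relative entropies, of the edge measure `Q̂` against `Q̃` and of
its row marginal `μ̂` against `μ̃`. Grouping the edges of `B` by rows and applying the log-sum
inequality (Jensen for the convex function `x ↦ x log x`) row by row shows that passing to the
marginal can only decrease relative entropy, so `ψ̄ ≥ 0` once `Q̂ ≥ 0`, which holds because
`Q̂` is a convex combination of `Q̃` and `Q`. At `Q = Q̃` we have `Q̂ = Q̃`, so every logarithm
is `log 1 = 0`. -/

theorem Real.sum_mul_log_div_sum_le {ι : Type*} (s : Finset ι) {a b : ι → ℝ}
    (ha : ∀ j ∈ s, 0 ≤ a j) (hb : ∀ j ∈ s, 0 < b j) :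
    (∑ j ∈ s, a j) * Real.log ((∑ j ∈ s, a j) / ∑ j ∈ s, b j) ≤
      ∑ j ∈ s, a j * Real.log (a j / b j) := by
  rcases s.eq_empty_or_nonempty with rfl | hs
  · simp
  set β := ∑ j ∈ s, b j
  have hβ : 0 < β := Finset.sum_pos hb hs
  have jensen := Real.convexOn_mul_log.map_sum_le (t := s) (w := fun j => b j / β)
    (p := fun j => a j / b j) (fun j hj => (div_pos (hb j hj) hβ).le)
    (by rw [← Finset.sum_div, div_self hβ.ne'])
    (fun j hj => Set.mem_Ici.2 (div_nonneg (ha j hj) (hb j hj).le))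
  have hmean : ∑ j ∈ s, b j / β * (a j / b j) = (∑ j ∈ s, a j) / β := by
    rw [Finset.sum_div]
    refine Finset.sum_congr rfl fun j hj => ?_
    field_simp [(hb j hj).ne']
  have hvalues : ∑ j ∈ s, b j / β * (a j / b j * Real.log (a j / b j)) =
      (∑ j ∈ s, a j * Real.log (a j / b j)) / β := by
    rw [Finset.sum_div]
    refine Finset.sum_congr rfl fun j hj => ?_
    field_simp [(hb j hj).ne']
  simp only [smul_eq_mul] at jensen
  rw [hmean, hvalues, div_mul_eq_mul_div, div_le_div_iff_of_pos_right hβ] at jensen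
  exact jensen

section RowSums

variable {S : Type} [Fintype S] [DecidableEq S]

theorem sum_eq_sum_rowSum (B : Finset (S × S)) (f : S × S → ℝ) :
    ∑ e ∈ B, f e = ∑ i : S, rowSum B f i :=
  Finset.sum_finset_product B Finset.univ _ (by simp)

theorem sum_rowSum_mul_log_div_le (B : Finset (S × S)) {P Qt : S × S → ℝ}
    (hP : ∀ e ∈ B, 0 ≤ P e) (hQt : ∀ e ∈ B, 0 < Qt e) :
    ∑ i : S, rowSum B P i * Real.log (rowSum B P i / rowSum B Qt i) ≤
      ∑ e ∈ B, P e * Real.log (P e / Qt e) := by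
  rw [sum_eq_sum_rowSum B]
  refine Finset.sum_le_sum fun i _ => Real.sum_mul_log_div_sum_le _ ?_ ?_
  · exact fun j hj => hP (i, j) (Finset.mem_filter.1 hj).2
  · exact fun j hj => hQt (i, j) (Finset.mem_filter.1 hj).2

end RowSums

theorem hatQ_self {α : Type} (Q : α → ℝ) (κ : ℝ) : hatQ Q κ Q = Q := by
  funext e
  simp only [hatQ]
  ring

theorem hatQ_nonneg {α : Type} {Qt Q : α → ℝ} {κ : ℝ} (hκ0 : 0 ≤ κ) (hκ1 : κ ≤ 1) {e : α}
    (hQt : 0 ≤ Qt e) (hQ : 0 ≤ Q e) : 0 ≤ hatQ Qt κ Q e :=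
  add_nonneg (mul_nonneg (sub_nonneg.2 hκ1) hQt) (mul_nonneg hκ0 hQ)

section Psibar

variable {S : Type} [Fintype S] [DecidableEq S] (B : Finset (S × S))

theorem psibar_nonneg {Qt Q : S × S → ℝ} (hQt : ∀ e ∈ B, 0 < Qt e) (hQ : ∀ e ∈ B, 0 ≤ Q e)
    {κ κ' : ℝ} (hκ0 : 0 ≤ κ) (hκ1 : κ ≤ 1) (hκ' : 0 ≤ κ') :
    0 ≤ psibar B Qt κ κ' Q :=
  mul_nonneg hκ' <| sub_nonneg.2 <| sum_rowSum_mul_log_div_le B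
    (fun e he => hatQ_nonneg hκ0 hκ1 (hQt e he).le (hQ e he)) hQt

theorem psibar_self (Qt : S × S → ℝ) (κ κ' : ℝ) : psibar B Qt κ κ' Qt = 0 := by
  simp only [psibar, hatQ_self, Real.log_div_self, mul_zero, Finset.sum_const_zero, sub_self]

end Psibar

theorem psibar_nonneg_and_value_match_general {S : Type} [Fintype S] [DecidableEq S]
    (B : Finset (S × S))
    (Qt : S × S → ℝ) (hQtpos : ∀ e ∈ B, 0 < Qt e)
    (κ κ' : ℝ) (hκ0 : 0 < κ) (hκ1 : κ ≤ 1) (hκ' : 0 < κ') :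
    (∀ Q : S × S → ℝ, (∀ e ∈ B, 0 ≤ Q e) → (∀ e ∉ B, Q e = 0) →
        0 ≤ psibar B Qt κ κ' Q) ∧
    psibar B Qt κ κ' Qt = 0 ∧
    (∀ c : S × S → ℝ, ∀ Q : S × S → ℝ, (∀ e ∈ B, 0 ≤ Q e) → (∀ e ∉ B, Q e = 0) →
        (∑ e ∈ B, Q e * c e) - psibar B Qt κ κ' Q ≤ ∑ e ∈ B, Q e * c e) ∧
    (∀ c : S × S → ℝ,
        (∑ e ∈ B, Qt e * c e) - psibar B Qt κ κ' Qt = ∑ e ∈ B, Qt e * c e) := by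
  have hnonneg (Q : S × S → ℝ) (hQ : ∀ e ∈ B, 0 ≤ Q e) : 0 ≤ psibar B Qt κ κ' Q :=
    psibar_nonneg B hQtpos hQ hκ0.le hκ1 hκ'.le
  refine ⟨fun Q hQ _ => hnonneg Q hQ, psibar_self B Qt κ κ', ?_, ?_⟩
  · exact fun c Q hQ _ => sub_le_self _ (hnonneg Q hQ)
  · intro c
    rw [psibar_self, sub_zero]

/-- The surrogate penalty `ψ̄_{Q̃}` is nonnegative on the set of edge
measures that are nonnegative on `B` and vanish off `B`, and it vanishes at `Q = Q̃`.
Consequently, for every `c : S × S → ℝ`, the surrogate function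
`ψ_{Q̃}(Q) = Σ_{(i,j)∈B} Q_{ij}·c_{ij} − ψ̄_{Q̃}(Q)` lies below the linear functional
`Σ_{(i,j)∈B} Q_{ij}·c_{ij}`, with equality at `Q = Q̃`. -/
theorem psibar_nonneg_and_value_match {S : Type} [Fintype S] [DecidableEq S]
    (B : Finset (S × S)) (hB : ∀ i : S, ∃ j : S, (i, j) ∈ B)
    (Qt : S × S → ℝ) (hQtoff : ∀ e ∉ B, Qt e = 0) (hQtpos : ∀ e ∈ B, 0 < Qt e)
    (κ κ' : ℝ) (hκ0 : 0 < κ) (hκ1 : κ ≤ 1) (hκ' : 0 < κ') :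
    (∀ Q : S × S → ℝ, (∀ e ∈ B, 0 ≤ Q e) → (∀ e ∉ B, Q e = 0) →
        0 ≤ psibar B Qt κ κ' Q) ∧
    psibar B Qt κ κ' Qt = 0 ∧
    (∀ c : S × S → ℝ, ∀ Q : S × S → ℝ, (∀ e ∈ B, 0 ≤ Q e) → (∀ e ∉ B, Q e = 0) →
        (∑ e ∈ B, Q e * c e) - psibar B Qt κ κ' Q ≤ ∑ e ∈ B, Q e * c e) ∧
    (∀ c : S × S → ℝ,
        (∑ e ∈ B, Qt e * c e) - psibar B Qt κ κ' Qt = ∑ e ∈ B, Qt e * c e) :=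
  psibar_nonneg_and_value_match_general B Qt hQtpos κ κ' hκ0 hκ1 hκ'
end

section
/- Let Q : S × S → ℝ vanish off B and satisfy Q̂_{ij} > 0 for every (i,j) ∈ B. Then for each (i,j) ∈ B, the function t ↦ ψ̄_{Q̃}(Q + t·e_{ij}) (where e_{ij} : S × S → ℝ is the indicator of the coordinate (i,j)) is differentiable at t = 0 with derivative κ·κ'·log( (Q̂_{ij}/μ̂_i) · (μ̃_i/Q̃_{ij}) ), i.e., the partial derivative of ψ̄_{Q̃} with respect to Q_{ij} equals κκ'·( log(p̂_{ij}) − log(p̃_{ij}) ) where p̂_{ij} = Q̂_{ij}/μ̂_i and p̃_{ij} = Q̃_{ij}/μ̃_i. -/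
open Finset

/-! Perturbing `Q_{ij}` at unit speed moves exactly one edge term `Q̂_{ij}` and one row term
`μ̂_i` of `ψ̄`, both at speed `κ`. Since `d/dx [x log (x/b)] = log (x/b) + 1`, the two `+1`s
cancel and what is left is `κκ' (log (Q̂_{ij}/Q̃_{ij}) - log (μ̂_i/μ̃_i))`. -/

lemma hasDerivAt_mul_log_div {a b : ℝ} (ha : a ≠ 0) (hb : b ≠ 0) :
    HasDerivAt (fun x : ℝ => x * Real.log (x / b)) (Real.log (a / b) + 1) a := by
  refine ((hasDerivAt_id' a).fun_mul
    (((hasDerivAt_id' a).div_const b).log (div_ne_zero ha hb))).congr_deriv ?_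
  field_simp

lemma hasDerivAt_sum_comp_add_single {ι : Type*} [DecidableEq ι] {s : Finset ι}
    {φ : ι → ℝ → ℝ} {x : ι → ℝ} (c : ℝ) {e₀ : ι} (he₀ : e₀ ∈ s) {φ' : ℝ}
    (hφ : HasDerivAt (φ e₀) φ' (x e₀)) :
    HasDerivAt (fun t => ∑ e ∈ s, φ e (x e + c * t * if e = e₀ then 1 else 0)) (c * φ') 0 := by
  have hterm : ∀ e ∈ s, HasDerivAt (fun t => φ e (x e + c * t * if e = e₀ then 1 else 0))
      (if e = e₀ then c * φ' else 0) 0 := by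
    intro e _
    split_ifs with he
    · subst he
      have hlin : HasDerivAt (fun t : ℝ => x e + c * t * 1) c 0 := by
        simpa using ((hasDerivAt_id (0 : ℝ)).const_mul c).const_add (x e)
      rw [mul_comm]
      exact hφ.comp_of_eq 0 hlin (by simp)
    · simpa only [mul_zero, add_zero] using hasDerivAt_const (0 : ℝ) (φ e (x e))
  simpa [Finset.sum_ite_eq', he₀] using HasDerivAt.fun_sum hterm

lemma hatQ_add_mul {α : Type} (Qt Q v : α → ℝ) (κ t : ℝ) :
    hatQ Qt κ (fun e => Q e + t * v e) = fun e => hatQ Qt κ Q e + κ * t * v e := by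
  funext e
  simp only [hatQ]
  ring

section rowSum

variable {S : Type} [Fintype S] [DecidableEq S] {B : Finset (S × S)}

lemma rowSum_add_mul_single (f : S × S → ℝ) (c : ℝ) {i j : S} (hij : (i, j) ∈ B) (i' : S) :
    rowSum B (fun e => f e + c * if e = (i, j) then 1 else 0) i'
      = rowSum B f i' + c * if i' = i then 1 else 0 := by
  simp only [rowSum, sum_add_distrib, Prod.mk.injEq, ← mul_sum]
  by_cases hi : i' = i
  · subst hi
    simp [Finset.sum_ite_eq', hij]
  · simp [hi]

lemma rowSum_pos {f : S × S → ℝ} (hf : ∀ e ∈ B, 0 < f e) {i j : S} (hij : (i, j) ∈ B) :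
    0 < rowSum B f i :=
  sum_pos (fun _ hj' => hf _ (mem_filter.1 hj').2) ⟨j, mem_filter.2 ⟨mem_univ j, hij⟩⟩

end rowSum

theorem psibar_partial_deriv_general {S : Type} [Fintype S] [DecidableEq S]
    (B : Finset (S × S))
    (Qt : S × S → ℝ) (hQtpos : ∀ e ∈ B, 0 < Qt e)
    (κ κ' : ℝ)
    (Q : S × S → ℝ)
    (hQhatpos : ∀ e ∈ B, 0 < hatQ Qt κ Q e)
    (i j : S) (hij : (i, j) ∈ B) :
    HasDerivAt
      (fun t : ℝ =>
        psibar B Qt κ κ' (fun e => Q e + t * (if e = (i, j) then (1 : ℝ) else 0)))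
      (κ * κ' * Real.log ((hatQ Qt κ Q (i, j) / rowSum B (hatQ Qt κ Q) i) *
        (rowSum B Qt i / Qt (i, j))))
      0 := by
  have ha := hQhatpos _ hij
  have hb := hQtpos _ hij
  have hμ := rowSum_pos hQhatpos hij
  have hν := rowSum_pos hQtpos hij
  have hedge := hasDerivAt_sum_comp_add_single (φ := fun e y => y * Real.log (y / Qt e))
    (x := hatQ Qt κ Q) κ hij (hasDerivAt_mul_log_div ha.ne' hb.ne')
  have hrow := hasDerivAt_sum_comp_add_single (φ := fun i y => y * Real.log (y / rowSum B Qt i))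
    (x := rowSum B (hatQ Qt κ Q)) κ (mem_univ i) (hasDerivAt_mul_log_div hμ.ne' hν.ne')
  simp only [psibar, hatQ_add_mul, rowSum_add_mul_single _ _ hij]
  refine ((hedge.fun_sub hrow).const_mul κ').congr_deriv ?_
  rw [Real.log_mul (by positivity) (by positivity), Real.log_div ha.ne' hμ.ne',
    Real.log_div hν.ne' hb.ne', Real.log_div ha.ne' hb.ne', Real.log_div hμ.ne' hν.ne']
  ring

/-- Partial derivative of the surrogate penalty: if `Q` vanishes off `B`
and `Q̂_{ij} > 0` on `B`, then for each `(i,j) ∈ B`, the function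
`t ↦ ψ̄_{Q̃}(Q + t·e_{ij})` is differentiable at `t = 0` with derivative
`κκ'·log( (Q̂_{ij}/μ̂_i) · (μ̃_i/Q̃_{ij}) )`. -/
theorem psibar_partial_deriv {S : Type} [Fintype S] [DecidableEq S]
    (B : Finset (S × S)) (hB : ∀ i : S, ∃ j : S, (i, j) ∈ B)
    (Qt : S × S → ℝ) (hQtoff : ∀ e ∉ B, Qt e = 0) (hQtpos : ∀ e ∈ B, 0 < Qt e)
    (κ κ' : ℝ) (hκ0 : 0 < κ) (hκ1 : κ ≤ 1) (hκ' : 0 < κ')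
    (Q : S × S → ℝ) (hQoff : ∀ e ∉ B, Q e = 0)
    (hQhatpos : ∀ e ∈ B, 0 < hatQ Qt κ Q e)
    (i j : S) (hij : (i, j) ∈ B) :
    HasDerivAt
      (fun t : ℝ =>
        psibar B Qt κ κ' (fun e => Q e + t * (if e = (i, j) then (1 : ℝ) else 0)))
      (κ * κ' * Real.log ((hatQ Qt κ Q (i, j) / rowSum B (hatQ Qt κ Q) i) *
        (rowSum B Qt i / Qt (i, j))))
      0 :=
  psibar_partial_deriv_general B Qt hQtpos κ κ' Q hQhatpos i j hij
end
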